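/- Let X be a Hausdorff topological space with a continuous action of the multiplicative group ℂ* = ℂ \ {0}, and let f : X → ℂ^N be a continuous proper map satisfying f(t • x) = t² · f(x) for all t ∈ ℂ* and x ∈ X (where t² · acts by scalar multiplication on ℂ^N). Then for every x ∈ X, the ℂ*-orbit {t • x : t ∈ ℂ*} has compact closure in X if and only if f(x) = 0. -/
import Mathlib


/-- If `f : X → ℂ^N` is a continuous proper map, equivariant for a continuous
`ℂ*`-action on `X` with `f (t • x) = t² • f x`, then the `ℂ*`-orbit of `x` has
compact closure iff `f x = 0`. -/
theorem stmt_3 {X : Type*} [TopologicalSpace X] [T2Space X] [MulAction ℂˣ X]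
    (hcont : Continuous fun p : ℂˣ × X => p.1 • p.2)
    (N : ℕ) (f : X → (Fin N → ℂ)) (hf : Continuous f) (hprop : IsProperMap f)
    (hequiv : ∀ (t : ℂˣ) (x : X), f (t • x) = ((t : ℂ) ^ 2) • f x) :
    ∀ x : X, IsCompact (closure (MulAction.orbit ℂˣ x)) ↔ f x = 0 := by
  intro x
  constructor
  · intro hK
    by_contra hfx
    obtain ⟨C, hC⟩ := (hK.image hf).isBounded.exists_norm_le
    have hfxpos : 0 < ‖f x‖ := norm_pos_iff.mpr hfx
    obtain ⟨n, hn⟩ := exists_nat_gt (max 1 (C / ‖f x‖))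
    have hn1 : (1 : ℝ) < n := lt_of_le_of_lt (le_max_left _ _) hn
    have hn0 : (n : ℂ) ≠ 0 := by
      exact_mod_cast ne_of_gt (lt_trans one_pos (by exact_mod_cast hn1))
    set t : ℂˣ := Units.mk0 (n : ℂ) hn0
    have hmem : f (t • x) ∈ f '' closure (MulAction.orbit ℂˣ x) :=
      Set.mem_image_of_mem f (subset_closure ⟨t, rfl⟩)
    have hle := hC _ hmem
    rw [hequiv, norm_smul] at hle
    have h1 : ‖((t : ℂ)) ^ 2‖ = (n : ℝ) ^ 2 := by
      simp [t, norm_pow]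
    rw [h1] at hle
    have hCfx : C / ‖f x‖ < (n : ℝ) := lt_of_le_of_lt (le_max_right _ _) hn
    have : C < (n : ℝ) * ‖f x‖ := (div_lt_iff₀ hfxpos).mp hCfx
    have hnn : (n : ℝ) * ‖f x‖ ≤ (n : ℝ) ^ 2 * ‖f x‖ := by
      have : (n : ℝ) ≤ (n : ℝ) ^ 2 := by nlinarith
      exact mul_le_mul_of_nonneg_right this (norm_nonneg _)
    linarith
  · intro hfx
    have hsub : MulAction.orbit ℂˣ x ⊆ f ⁻¹' {0} := by
      rintro y ⟨t, rfl⟩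
      simp [hequiv, hfx]
    have hcpt : IsCompact (f ⁻¹' {0}) :=
      hprop.isCompact_preimage isCompact_singleton
    exact hcpt.of_isClosed_subset isClosed_closure
      (closure_minimal hsub (isClosed_singleton.preimage hf))
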